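/- arXiv:2104.00187 — 4 statements merged into one kernel-verified Lean document; each statement's English description precedes it below -/
import Mathlib

section
/- Let (X_n, G_n), n = 1,2,…, be mm-spaces with closed subgroups G_n ⊆ Aut(X_n), and let (Y, H) be an mm-space with a closed subgroup H ⊆ Aut(Y). If □((X_n,G_n),(Y,H)) → 0 as n → ∞, then the metric spaces (G_n, d_KF^{μ_{X_n}}) are uniformly totally bounded: for every δ > 0 there exist N ∈ ℕ and n₀ such that for all n ≥ n₀, every δ-discrete subset of G_n (a subset in which any two distinct elements have Ky Fan distance ≥ δ) has at most N elements. In particular, the family {(G_n, d_KF^{μ_{X_n}})} is precompact with respect to the Gromov–Hausdorff topology. -/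
open MeasureTheory Metric Filter Set TopologicalSpace
open scoped ENNReal Topology

noncomputable section

/-- The Ky Fan distance between two maps with respect to a measure:
`inf { ε ≥ 0 | μ {ω | d(u ω, u' ω) > ε} ≤ ε }`. -/
def kyFan {Ω : Type*} [MeasurableSpace Ω] (μ : Measure Ω)
    {Z : Type*} [PseudoMetricSpace Z] (u u' : Ω → Z) : ℝ :=
  sInf {ε : ℝ | 0 ≤ ε ∧ μ {ω | ε < dist (u ω) (u' ω)} ≤ ENNReal.ofReal ε}

/-- `g` is an automorphism of the mm-space `(X, d, μ)`: a bijective isometry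
preserving the measure. -/
def IsAut {X : Type*} [MetricSpace X] [MeasurableSpace X] (μ : Measure X) (g : X → X) : Prop :=
  Isometry g ∧ Function.Bijective g ∧ Measure.map g μ = μ

/-- `G` is a subgroup of `Aut(X)` that is closed with respect to the Ky Fan metric
(equivalently, under convergence in `μ`-measure). -/
def IsClosedAutSubgroup {X : Type*} [MetricSpace X] [MeasurableSpace X]
    (μ : Measure X) (G : Set (X → X)) : Prop :=
  (∀ g ∈ G, IsAut μ g) ∧ (id ∈ G) ∧ (∀ g ∈ G, ∀ g' ∈ G, g ∘ g' ∈ G) ∧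
  (∀ g ∈ G, ∃ g' ∈ G, g' ∘ g = id ∧ g ∘ g' = id) ∧
  (∀ (gs : ℕ → X → X) (g : X → X), (∀ n, gs n ∈ G) → IsAut μ g →
    Tendsto (fun n => kyFan μ (gs n) g) atTop (𝓝 0) → g ∈ G)

/-- Couplings between two measures: measures on the product with the given marginals. -/
def couplings {X Y : Type*} [MeasurableSpace X] [MeasurableSpace Y]
    (μ : Measure X) (ν : Measure Y) : Set (Measure (X × Y)) :=
  {π | π.map Prod.fst = μ ∧ π.map Prod.snd = ν}

/-- The support of a Borel measure: points all of whose open neighborhoods have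
positive measure. -/
def msupport {Z : Type*} [TopologicalSpace Z] [MeasurableSpace Z] (π : Measure Z) : Set Z :=
  {z | ∀ U : Set Z, IsOpen U → z ∈ U → 0 < π U}

/-- `d^S(g,h) = sup_{((x₁,y₁),(x₂,y₂)) ∈ S × S} |d_X(g x₁, x₂) - d_Y(h y₁, y₂)|`,
with value `0` for `S = ∅`. -/
def dS {X Y : Type*} [MetricSpace X] [MetricSpace Y]
    (S : Set (X × Y)) (g : X → X) (h : Y → Y) : ℝ≥0∞ :=
  ⨆ p ∈ S ×ˢ S, ENNReal.ofReal |dist (g p.1.1) p.2.1 - dist (h p.1.2) p.2.2|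

/-- `d^π(g,h) = inf { max(1 - π S, d^S(g,h)) | S ⊆ supp π closed }`. -/
def dPi {X Y : Type*} [MetricSpace X] [MetricSpace Y] [MeasurableSpace X] [MeasurableSpace Y]
    (π : Measure (X × Y)) (g : X → X) (h : Y → Y) : ℝ≥0∞ :=
  ⨅ S ∈ {S : Set (X × Y) | IsClosed S ∧ S ⊆ msupport π}, max (1 - π S) (dS S g h)

/-- `□^π((X,G),(Y,H))`: the Hausdorff distance between `G` and `H` w.r.t. `d^π`. -/
def boxPi {X Y : Type*} [MetricSpace X] [MetricSpace Y] [MeasurableSpace X] [MeasurableSpace Y]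
    (π : Measure (X × Y)) (G : Set (X → X)) (H : Set (Y → Y)) : ℝ≥0∞ :=
  max (⨆ g ∈ G, ⨅ h ∈ H, dPi π g h) (⨆ h ∈ H, ⨅ g ∈ G, dPi π g h)

/-- The equivariant box distance `□((X,G),(Y,H)) = inf_{π ∈ Π(μ,ν)} □^π((X,G),(Y,H))`. -/
def eqBox {X Y : Type*} [MetricSpace X] [MetricSpace Y] [MeasurableSpace X] [MeasurableSpace Y]
    (μ : Measure X) (ν : Measure Y) (G : Set (X → X)) (H : Set (Y → Y)) : ℝ≥0∞ :=
  ⨅ π ∈ couplings μ ν, boxPi π G H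

/-- The set of real-valued 1-Lipschitz functions. -/
def Lip1 (X : Type*) [PseudoMetricSpace X] : Set (X → ℝ) := {f | LipschitzWith 1 f}

/-- `ρ^π_{g,h}(f,f') = max( d_KF^π(f∘p₁, f'∘p₂), d_KF^π(f∘g∘p₁, f'∘h∘p₂) )`. -/
def rhoPair {X Y : Type*} [MetricSpace X] [MetricSpace Y] [MeasurableSpace X] [MeasurableSpace Y]
    (π : Measure (X × Y)) (g : X → X) (h : Y → Y) (f : X → ℝ) (f' : Y → ℝ) : ℝ :=
  max (kyFan π (fun p => f p.1) (fun p => f' p.2))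
      (kyFan π (fun p => f (g p.1)) (fun p => f' (h p.2)))

/-- `ρ^π(g,h)`: the Hausdorff distance between `Lip₁(X)` and `Lip₁(Y)` w.r.t. `ρ^π_{g,h}`. -/
def rhoPi {X Y : Type*} [MetricSpace X] [MetricSpace Y] [MeasurableSpace X] [MeasurableSpace Y]
    (π : Measure (X × Y)) (g : X → X) (h : Y → Y) : ℝ :=
  max (sSup ((fun f => sInf ((fun f' => rhoPair π g h f f') '' (Lip1 Y))) '' (Lip1 X)))
      (sSup ((fun f' => sInf ((fun f => rhoPair π g h f f') '' (Lip1 X))) '' (Lip1 Y)))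

/-- `d_conc^π((X,G),(Y,H))`: the Hausdorff distance between `G` and `H` w.r.t. `ρ^π`. -/
def dconcPi {X Y : Type*} [MetricSpace X] [MetricSpace Y] [MeasurableSpace X] [MeasurableSpace Y]
    (π : Measure (X × Y)) (G : Set (X → X)) (H : Set (Y → Y)) : ℝ :=
  max (sSup ((fun g => sInf ((fun h => rhoPi π g h) '' H)) '' G)) (sSup ((fun h => sInf ((fun g => rhoPi π g h) '' G)) '' H))

/-- The equivariant observable distance
`d_conc((X,G),(Y,H)) = inf_{π ∈ Π(μ,ν)} d_conc^π((X,G),(Y,H))`. -/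
def eqDconc {X Y : Type*} [MetricSpace X] [MetricSpace Y] [MeasurableSpace X] [MeasurableSpace Y]
    (μ : Measure X) (ν : Measure Y) (G : Set (X → X)) (H : Set (Y → Y)) : ℝ :=
  sInf ((fun π => dconcPi π G H) '' (couplings μ ν))

/-- `(X,G)` and `(Y,H)` are equivariantly mm-isomorphic: there is a measure-preserving
bijective isometry `φ : X → Y` equivariant with respect to a group isomorphism `G → H`. -/
def EquivMMIso {X Y : Type*} [MetricSpace X] [MetricSpace Y] [MeasurableSpace X] [MeasurableSpace Y]
    (μ : Measure X) (ν : Measure Y) (G : Set (X → X)) (H : Set (Y → Y)) : Prop :=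
  ∃ φ : X → Y, Isometry φ ∧ Function.Bijective φ ∧ Measure.map φ μ = ν ∧
    ∃ ρ : (X → X) → (Y → Y), Set.BijOn ρ G H ∧
      (∀ g ∈ G, ∀ g' ∈ G, ρ (g ∘ g') = ρ g ∘ ρ g') ∧
      (∀ g ∈ G, ∀ x, φ (g x) = ρ g (φ x))

/-- The Prokhorov (Lévy–Prokhorov) distance between two Borel measures. -/
def prokhorov {X : Type*} [PseudoMetricSpace X] [MeasurableSpace X] (μ ν : Measure X) : ℝ :=
  sInf {ε : ℝ | 0 < ε ∧ ∀ A : Set X, MeasurableSet A →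
    μ A ≤ ν (Metric.thickening ε A) + ENNReal.ofReal ε ∧
    ν A ≤ μ (Metric.thickening ε A) + ENNReal.ofReal ε}

/-- The κ-observable diameter `ObsDiam(X;-κ) = sup_{f ∈ Lip₁(X)} diam(f_*μ; -κ)`. -/
def obsDiam {X : Type*} [MetricSpace X] [MeasurableSpace X] (μ : Measure X) (κ : ℝ) : ℝ≥0∞ :=
  ⨆ f ∈ Lip1 X,
    ⨅ A ∈ {A : Set ℝ | MeasurableSet A ∧ 1 - ENNReal.ofReal κ ≤ μ.map f A}, EMetric.diam A

/-- Weak Hausdorff convergence of a sequence of (closed) subsets, with the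
convention `d(x, ∅) = ∞` (via `EMetric.infEdist`). -/
def WeakHausTendsto {X : Type*} [MetricSpace X] (S : ℕ → Set X) (T : Set X) : Prop :=
  (∀ x ∈ T, Tendsto (fun n => EMetric.infEdist x (S n)) atTop (𝓝 0)) ∧
  (∀ x ∉ T, 0 < Filter.liminf (fun n => EMetric.infEdist x (S n)) atTop)


/-! ### Auxiliary lemmas -/

section KyFanLemmas

variable {Ω Z : Type*} [MeasurableSpace Ω] [PseudoMetricSpace Z]

lemma kyFan_le_of (μ : Measure Ω) (u u' : Ω → Z) {ε : ℝ} (hε : 0 ≤ ε)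
    (h : μ {ω | ε < dist (u ω) (u' ω)} ≤ ENNReal.ofReal ε) : kyFan μ u u' ≤ ε :=
  csInf_le ⟨0, fun _ hx => hx.1⟩ ⟨hε, h⟩

lemma measure_le_of_kyFan_lt (μ : Measure Ω) [IsProbabilityMeasure μ] (u u' : Ω → Z) {c : ℝ}
    (h : kyFan μ u u' < c) : μ {ω | c < dist (u ω) (u' ω)} ≤ ENNReal.ofReal c := by
  have hne : ((1:ℝ) ∈ {ε : ℝ | 0 ≤ ε ∧ μ {ω | ε < dist (u ω) (u' ω)} ≤ ENNReal.ofReal ε}) :=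
    ⟨zero_le_one, by simpa [ENNReal.ofReal_one] using prob_le_one (μ := μ)⟩
  obtain ⟨ε, hεm, hεc⟩ :=
    (csInf_lt_iff ⟨0, fun _ hx => hx.1⟩ ⟨1, hne⟩).mp h
  refine le_trans (measure_mono fun ω hω => ?_) (hεm.2.trans (ENNReal.ofReal_le_ofReal hεc.le))
  exact lt_trans hεc hω

end KyFanLemmas

/-- Tightness: a probability measure on a complete separable metric space has, for any
`ε ≠ 0`, a compact set whose complement has measure at most `ε`. -/
lemma tight_aux {Z : Type*} [MetricSpace Z] [CompleteSpace Z] [SeparableSpace Z]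
    [MeasurableSpace Z] [OpensMeasurableSpace Z] (μ : Measure Z) [IsProbabilityMeasure μ]
    {ε : ℝ≥0∞} (hε : ε ≠ 0) : ∃ K : Set Z, IsCompact K ∧ μ Kᶜ ≤ ε := by
  have hZne : Nonempty Z := by
    by_contra hZ
    have h0 : (Set.univ : Set Z) = ∅ := Set.univ_eq_empty_iff.mpr (not_nonempty_iff.mp hZ)
    have h1 : μ Set.univ = 1 := measure_univ
    rw [h0, measure_empty] at h1
    exact zero_ne_one h1
  obtain ⟨δf, hδpos, hδsum⟩ := ENNReal.exists_pos_sum_of_countable hε ℕ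
  set u := TopologicalSpace.denseSeq Z with hu_def
  have hu : DenseRange u := TopologicalSpace.denseRange_denseSeq Z
  set s : ℕ → ℕ → Set Z := fun m n => ⋃ i ∈ Finset.range n, closedBall (u i) (1/(m+1)) with hs_def
  have hscl : ∀ m n, IsClosed (s m n) := fun m n =>
    isClosed_biUnion_finset fun i _ => isClosed_closedBall
  have hcovm : ∀ m, (⋃ n, s m n) = Set.univ := by
    intro m
    refine Set.eq_univ_iff_forall.mpr fun z => ?_
    obtain ⟨i, hi⟩ := hu.exists_dist_lt z (show (0:ℝ) < 1/(m+1) by positivity)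
    exact Set.mem_iUnion.mpr ⟨i+1, Set.mem_biUnion (Finset.self_mem_range_succ i)
      (mem_closedBall.mpr hi.le)⟩
  have htend : ∀ m, Tendsto (fun n => μ (s m n)ᶜ) atTop (𝓝 0) := by
    intro m
    have hanti : Antitone (fun n => (s m n)ᶜ) := fun a b hab =>
      Set.compl_subset_compl.mpr
        (Set.biUnion_subset_biUnion_left (Finset.range_subset_range.mpr hab))
    have h1 : (⋂ n, (s m n)ᶜ) = ∅ := by
      rw [← Set.compl_iUnion, hcovm m, Set.compl_univ]
    have := tendsto_measure_iInter_atTop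
      (μ := μ) (s := fun n => (s m n)ᶜ)
      (fun n => ((hscl m n).measurableSet.compl).nullMeasurableSet)
      hanti ⟨0, measure_ne_top μ _⟩
    rw [h1, measure_empty] at this
    exact this
  have hsel : ∀ m, ∃ n, μ (s m n)ᶜ ≤ (δf m : ℝ≥0∞) := by
    intro m
    have := ((htend m).eventually_lt_const
      (show (0:ℝ≥0∞) < (δf m : ℝ≥0∞) from ENNReal.coe_pos.mpr (hδpos m))).exists
    exact ⟨this.choose, this.choose_spec.le⟩
  choose nsel hnsel using hsel
  refine ⟨⋂ m, s m (nsel m), ?_, ?_⟩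
  · apply TotallyBounded.isCompact_of_isClosed
    · refine Metric.totallyBounded_iff.mpr fun δ hδ => ?_
      obtain ⟨m, hm⟩ := exists_nat_one_div_lt (K := ℝ) hδ
      refine ⟨u '' (Finset.range (nsel m) : Set ℕ), (Set.toFinite _).image u, ?_⟩
      intro z hz
      have hz' : z ∈ s m (nsel m) := Set.mem_iInter.mp hz m
      obtain ⟨i, hi, hzi⟩ := Set.mem_iUnion₂.mp hz'
      refine Set.mem_biUnion (Set.mem_image_of_mem u (by simpa using hi)) ?_
      exact mem_ball.mpr (lt_of_le_of_lt (mem_closedBall.mp hzi) hm)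
    · exact isClosed_iInter fun m => hscl m (nsel m)
  · rw [Set.compl_iInter]
    exact le_trans (measure_iUnion_le _)
      (le_trans (ENNReal.tsum_le_tsum hnsel) hδsum.le)

/-- Key estimate: if `g, g'` are matched with `h, h'` by a coupling `π` with good closed
sets `S, S'`, and `h, h'` are Ky-Fan close, then `g, g'` are Ky-Fan close. -/
lemma keyB {X Y : Type*} [MetricSpace X] [MeasurableSpace X] [BorelSpace X]
    [CompleteSpace X] [SeparableSpace X]
    [MetricSpace Y] [MeasurableSpace Y] [BorelSpace Y]
    [CompleteSpace Y] [SeparableSpace Y]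
    (μ : Measure X) [IsProbabilityMeasure μ]
    (π : Measure (X × Y)) [IsProbabilityMeasure π]
    (hfst : π.map Prod.fst = μ)
    {g g' : X → X} (hg' : Continuous g') (hg'map : Measure.map g' μ = μ)
    {h h' : Y → Y} (hh : Continuous h) (hh' : Continuous h')
    {ε η : ℝ} (hε : 0 < ε) (hη : 0 < η)
    {S S' : Set (X × Y)} (hScl : IsClosed S) (hS'cl : IsClosed S')
    (hπS : π Sᶜ ≤ ENNReal.ofReal ε) (hπS' : π S'ᶜ ≤ ENNReal.ofReal ε)
    (hdS : ∀ p ∈ S, ∀ q ∈ S, |dist (g p.1) q.1 - dist (h p.2) q.2| ≤ ε)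
    (hdS' : ∀ p ∈ S', ∀ q ∈ S', |dist (g' p.1) q.1 - dist (h' p.2) q.2| ≤ ε) :
    π {p : X × Y | η < dist (h p.2) (h' p.2)} ≤ ENNReal.ofReal η →
    kyFan μ g g' ≤ 6*ε + 2*η := by
  intro hD
  set D : Set (X × Y) := {p | dist (h p.2) (h' p.2) ≤ η} with hD_def
  have hDcl : IsClosed D :=
    isClosed_le (Continuous.dist (hh.comp continuous_snd) (hh'.comp continuous_snd))
      continuous_const
  have hDc : π Dᶜ ≤ ENNReal.ofReal η := by
    refine le_trans (measure_mono fun p hp => ?_) hD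
    simpa [hD_def] using hp
  obtain ⟨K, hKcomp, hKc⟩ := tight_aux π (show ENNReal.ofReal ε ≠ 0 from
    (ENNReal.ofReal_pos.mpr hε).ne')
  set T : Set (X × Y) := S ∩ S' ∩ D ∩ K with hT_def
  have hTcomp : IsCompact T := hKcomp.inter_left ((hScl.inter hS'cl).inter hDcl)
  have hTm : MeasurableSet T := hTcomp.isClosed.measurableSet
  have hTS : T ⊆ S := fun p hp => hp.1.1.1
  have hTS' : T ⊆ S' := fun p hp => hp.1.1.2
  have hTD : T ⊆ D := fun p hp => hp.1.2
  have hπTc : π Tᶜ ≤ ENNReal.ofReal (3*ε + η) := by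
    have : Tᶜ ⊆ (Sᶜ ∪ S'ᶜ) ∪ (Dᶜ ∪ Kᶜ) := by
      intro p hp
      by_contra hcon
      simp only [Set.mem_union, Set.mem_compl_iff, not_or, not_not] at hcon
      exact hp ⟨⟨⟨hcon.1.1, hcon.1.2⟩, hcon.2.1⟩, hcon.2.2⟩
    refine le_trans (measure_mono this) ?_
    refine le_trans (measure_union_le _ _) ?_
    refine le_trans (add_le_add (measure_union_le _ _) (measure_union_le _ _)) ?_
    refine le_trans (add_le_add (add_le_add hπS hπS') (add_le_add hDc hKc)) ?_
    rw [← ENNReal.ofReal_add hε.le hε.le, ← ENNReal.ofReal_add hη.le hε.le,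
      ← ENNReal.ofReal_add (by linarith) (by linarith)]
    exact ENNReal.ofReal_le_ofReal (by linarith)
  set A : Set X := Prod.fst '' T with hA_def
  have hAcomp : IsCompact A := hTcomp.image continuous_fst
  have hAm : MeasurableSet A := hAcomp.isClosed.measurableSet
  have hμA : π T ≤ μ A := by
    rw [← hfst, Measure.map_apply measurable_fst hAm]
    exact measure_mono (Set.subset_preimage_image _ _)
  have hAc : μ Aᶜ ≤ ENNReal.ofReal (3*ε + η) := by
    rw [prob_compl_eq_one_sub hAm, tsub_le_iff_right]
    calc (1 : ℝ≥0∞) = π T + π Tᶜ := by rw [measure_add_measure_compl hTm, measure_univ]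
      _ ≤ μ A + ENNReal.ofReal (3*ε + η) := add_le_add hμA hπTc
      _ = ENNReal.ofReal (3*ε + η) + μ A := add_comm _ _
  have hpre : μ (g' ⁻¹' A)ᶜ ≤ ENNReal.ofReal (3*ε + η) := by
    rw [← Set.preimage_compl]
    rw [show μ (g' ⁻¹' Aᶜ) = (Measure.map g' μ) Aᶜ from
      (Measure.map_apply hg'.measurable hAm.compl).symm, hg'map]
    exact hAc
  have hpt : ∀ x ∈ A ∩ g' ⁻¹' A, dist (g x) (g' x) ≤ 2*ε + η := by
    rintro x ⟨hxA, hxA'⟩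
    obtain ⟨p, hpT, hp1⟩ := hxA
    obtain ⟨q, hqT, hq1⟩ := hxA'
    have h1 := hdS' p (hTS' hpT) q (hTS' hqT)
    rw [hp1, hq1] at h1
    have h2 : dist (h' p.2) q.2 ≤ ε := by
      rw [dist_self (g' x)] at h1
      have := abs_le.mp h1
      linarith
    have h3 : dist (h p.2) (h' p.2) ≤ η := hTD hpT
    have h4 := hdS p (hTS hpT) q (hTS hqT)
    rw [hp1, hq1] at h4
    have h5 : dist (h p.2) q.2 ≤ η + ε := le_trans (dist_triangle _ (h' p.2) _)
      (by linarith)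
    have := abs_le.mp h4
    linarith
  refine kyFan_le_of μ g g' (by linarith) ?_
  have hsub : {x | 6*ε + 2*η < dist (g x) (g' x)} ⊆ (A ∩ g' ⁻¹' A)ᶜ := by
    intro x hx hxB
    have := hpt x hxB
    simp only [Set.mem_setOf_eq] at hx
    linarith
  calc μ {x | 6*ε + 2*η < dist (g x) (g' x)} ≤ μ (A ∩ g' ⁻¹' A)ᶜ := measure_mono hsub
    _ ≤ μ Aᶜ + μ (g' ⁻¹' A)ᶜ := by
        rw [Set.compl_inter]; exact measure_union_le _ _
    _ ≤ ENNReal.ofReal (3*ε + η) + ENNReal.ofReal (3*ε + η) := add_le_add hAc hpre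
    _ = ENNReal.ofReal (6*ε + 2*η) := by
        rw [← ENNReal.ofReal_add (by linarith) (by linarith)]; ring_nf

/-- A finite classification of measure-preserving isometries of a complete separable
metric probability space of full support: maps in the same class are Ky-Fan `η`-close. -/
lemma exists_classifier {Y : Type*} [MetricSpace Y] [CompleteSpace Y] [SeparableSpace Y]
    [MeasurableSpace Y] [BorelSpace Y] (ν : Measure Y) [IsProbabilityMeasure ν]
    [ν.IsOpenPosMeasure] {η : ℝ} (hη0 : 0 < η) (hη1 : η < 1) :
    ∃ (N : ℕ) (Φ : (Y → Y) → Fin N),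
      ∀ h h' : Y → Y, Isometry h → Measure.map h ν = ν → Isometry h' → Measure.map h' ν = ν →
        Φ h = Φ h' → ν {y | η < dist (h y) (h' y)} ≤ ENNReal.ofReal η := by
  classical
  set r := η/6 with hr_def
  have hrpos : 0 < r := by positivity
  obtain ⟨K, hKcomp, hKc⟩ := tight_aux ν (show ENNReal.ofReal η ≠ 0 from
    (ENNReal.ofReal_pos.mpr hη0).ne')
  obtain ⟨t, htK, htfin, htcov⟩ := hKcomp.finite_cover_balls hrpos
  have hKne : K.Nonempty := by
    by_contra hKe
    rw [Set.not_nonempty_iff_eq_empty] at hKe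
    rw [hKe, Set.compl_empty, measure_univ] at hKc
    exact absurd hKc (not_le.mpr (ENNReal.ofReal_lt_one.mpr hη1))
  have htne : t.Nonempty := by
    obtain ⟨y, hy⟩ := hKne
    obtain ⟨x, hx, -⟩ := Set.mem_iUnion₂.mp (htcov hy)
    exact ⟨x, hx⟩
  set t' := htfin.toFinset with ht'_def
  have ht'ne : t'.Nonempty := by rwa [ht'_def, Set.Finite.toFinset_nonempty]
  set c := t'.inf' ht'ne (fun x => ν (closedBall x r)) with hc_def
  have hcpos : 0 < c := by
    obtain ⟨x₀, hx₀, hx₀eq⟩ := Finset.exists_mem_eq_inf' ht'ne (fun x => ν (closedBall x r))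
    rw [hc_def, hx₀eq]
    exact Metric.measure_closedBall_pos ν x₀ hrpos
  have hc1 : c ≤ 1 := by
    obtain ⟨x₀, hx₀, hx₀eq⟩ := Finset.exists_mem_eq_inf' ht'ne (fun x => ν (closedBall x r))
    rw [hc_def, hx₀eq]
    exact prob_le_one
  have hcnetop : c ≠ ⊤ := (lt_of_le_of_lt hc1 ENNReal.one_lt_top).ne
  have hiso : ∀ (h : Y → Y), Isometry h → Measure.map h ν = ν →
      ∀ x, ν (closedBall (h x) r) = ν (closedBall x r) := by
    intro h hhi hhm x
    conv_lhs => rw [← hhm]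
    rw [Measure.map_apply hhi.continuous.measurable measurableSet_closedBall]
    congr 1
    ext z
    simp [mem_closedBall, hhi.dist_eq]
  set B₀ := ⌈(1/c).toReal⌉₊ with hB₀_def
  have hbound : ∀ fam : Finset Y, (∀ p ∈ fam, c ≤ ν (closedBall p r)) →
      (∀ p ∈ fam, ∀ q ∈ fam, p ≠ q → 2*r < dist p q) → fam.card ≤ B₀ := by
    intro fam hfc hsep
    have hdisj : (↑fam : Set Y).PairwiseDisjoint (fun p => closedBall p r) := by
      intro p hp q hq hpq
      exact closedBall_disjoint_closedBall (by
        have := hsep p (by simpa using hp) q (by simpa using hq) hpq; linarith)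
    have hsum : (fam.card : ℝ≥0∞) * c ≤ 1 := by
      calc (fam.card : ℝ≥0∞) * c = ∑ _p ∈ fam, c := by
            rw [Finset.sum_const, nsmul_eq_mul]
        _ ≤ ∑ p ∈ fam, ν (closedBall p r) := Finset.sum_le_sum hfc
        _ = ν (⋃ p ∈ fam, closedBall p r) :=
            (measure_biUnion_finset hdisj (fun _ _ => measurableSet_closedBall)).symm
        _ ≤ 1 := prob_le_one
    have hle : (fam.card : ℝ≥0∞) ≤ 1/c :=
      (ENNReal.le_div_iff_mul_le (Or.inl hcpos.ne') (Or.inl hcnetop)).mpr hsum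
    have hne : (1/c : ℝ≥0∞) ≠ ⊤ := by
      rw [one_div]
      exact ENNReal.inv_ne_top.mpr hcpos.ne'
    have hR : (fam.card : ℝ) ≤ (1/c).toReal := by
      have := ENNReal.toReal_mono hne hle
      simpa using this
    exact_mod_cast hR.trans (Nat.le_ceil _)
  set Q : ℕ → Prop := fun k => ∃ fam : Finset Y,
    (∀ p ∈ fam, c ≤ ν (closedBall p r)) ∧
    (∀ p ∈ fam, ∀ q ∈ fam, p ≠ q → 2*r < dist p q) ∧ fam.card = k with hQ_def
  have hQ0 : Q 0 := ⟨∅, by simp, by simp, rfl⟩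
  have hk := Nat.findGreatest_spec (P := Q) (Nat.zero_le B₀) hQ0
  obtain ⟨fam, hfc, hsep, hfcard⟩ := hk
  have hcover : ∀ y, c ≤ ν (closedBall y r) → ∃ p ∈ fam, dist y p ≤ 2*r := by
    intro y hy
    by_contra hno
    push_neg at hno
    have hynot : y ∉ fam := fun hy' => by
      have := hno y hy'
      rw [dist_self] at this
      linarith
    have hQk : Q (Nat.findGreatest Q B₀ + 1) := by
      refine ⟨insert y fam, ?_, ?_, ?_⟩
      · intro p hp
        rcases Finset.mem_insert.mp hp with rfl | hp
        · exact hy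
        · exact hfc p hp
      · intro p hp q hq hpq
        rcases Finset.mem_insert.mp hp with rfl | hp' <;>
          rcases Finset.mem_insert.mp hq with rfl | hq'
        · exact absurd rfl hpq
        · exact hno q hq'
        · rw [dist_comm]; exact hno p hp'
        · exact hsep p hp' q hq' hpq
      · rw [Finset.card_insert_of_notMem hynot, hfcard]
    have hle := hbound _ hQk.choose_spec.1 hQk.choose_spec.2.1
    rw [hQk.choose_spec.2.2] at hle
    exact Nat.findGreatest_is_greatest (Nat.lt_succ_self _) hle hQk
  set P : Type _ := {x // x ∈ t'} → Option {p // p ∈ fam} with hP_def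
  haveI : Fintype P := by rw [hP_def]; infer_instance
  set e := Fintype.equivFin P with he_def
  set Φ₀ : (Y → Y) → P := fun h x =>
    if hex : ∃ p ∈ fam, dist (h x.1) p ≤ 2*r then some ⟨hex.choose, hex.choose_spec.1⟩
    else none with hΦ₀_def
  refine ⟨Fintype.card P, fun h => e (Φ₀ h), ?_⟩
  intro h h' hhi hhm hh'i hh'm hΦeq
  have hΦ0eq : Φ₀ h = Φ₀ h' := e.injective hΦeq
  have hxd : ∀ x ∈ t', dist (h x) (h' x) ≤ 4*r := by
    intro x hx
    have hex : ∃ p ∈ fam, dist (h x) p ≤ 2*r := by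
      refine hcover _ ?_
      rw [hiso h hhi hhm x]
      exact Finset.inf'_le _ hx
    have hex' : ∃ p ∈ fam, dist (h' x) p ≤ 2*r := by
      refine hcover _ ?_
      rw [hiso h' hh'i hh'm x]
      exact Finset.inf'_le _ hx
    have hfx := congrFun hΦ0eq ⟨x, hx⟩
    rw [hΦ₀_def] at hfx
    simp only [dif_pos hex, dif_pos hex'] at hfx
    have hpe : hex.choose = hex'.choose := congrArg Subtype.val (Option.some.inj hfx)
    have h1 := hex.choose_spec.2
    have h2 := hex'.choose_spec.2
    rw [← hpe] at h2
    calc dist (h x) (h' x) ≤ dist (h x) hex.choose + dist (h' x) hex.choose :=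
        dist_triangle_right _ _ _
      _ ≤ 2*r + 2*r := add_le_add h1 h2
      _ = 4*r := by ring
  refine le_trans (measure_mono ?_) hKc
  intro y hy
  simp only [Set.mem_setOf_eq] at hy
  simp only [Set.mem_compl_iff]
  intro hyK
  obtain ⟨x, hxt, hyx⟩ := Set.mem_iUnion₂.mp (htcov hyK)
  have hxt' : x ∈ t' := htfin.mem_toFinset.mpr hxt
  have hxd4 := hxd x hxt'
  have hdyx : dist y x < r := mem_ball.mp hyx
  have htri : dist (h y) (h' y) ≤ dist (h y) (h x) + dist (h x) (h' x) + dist (h' x) (h' y) :=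
    dist_triangle4 _ _ _ _
  rw [hhi.dist_eq, hh'i.dist_eq] at htri
  rw [dist_comm x y] at htri
  have : dist (h y) (h' y) < 6*r := by linarith
  rw [hr_def] at this
  linarith


/-- if `(Xₙ,Gₙ)` equivariantly box converges to `(Y,H)`, then the
groups `(Gₙ, d_KF)` are uniformly totally bounded: for every δ > 0 there is a
uniform bound on the cardinality of δ-discrete subsets of `Gₙ` for large `n`. -/
theorem stmt_13 (X : ℕ → Type*) [∀ n, MetricSpace (X n)] [∀ n, CompleteSpace (X n)]
    [∀ n, SeparableSpace (X n)] [∀ n, MeasurableSpace (X n)] [∀ n, BorelSpace (X n)]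
    (μ : ∀ n, Measure (X n)) [∀ n, IsProbabilityMeasure (μ n)]
    [∀ n, (μ n).IsOpenPosMeasure]
    (G : ∀ n, Set (X n → X n)) (hG : ∀ n, IsClosedAutSubgroup (μ n) (G n))
    {Y : Type*} [MetricSpace Y] [CompleteSpace Y] [SeparableSpace Y] [MeasurableSpace Y] [BorelSpace Y]
    (ν : Measure Y) [IsProbabilityMeasure ν] [ν.IsOpenPosMeasure]
    (H : Set (Y → Y)) (hH : IsClosedAutSubgroup ν H)
    (hconv : Tendsto (fun n => eqBox (μ n) ν (G n) H) atTop (𝓝 0)) :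
    ∀ δ : ℝ, 0 < δ → ∃ N n₀ : ℕ, ∀ n : ℕ, n₀ ≤ n →
      ∀ T : Set (X n → X n), T ⊆ G n →
        (∀ g ∈ T, ∀ g' ∈ T, g ≠ g' → δ ≤ kyFan (μ n) g g') →
        T.Finite ∧ T.ncard ≤ N := by
  classical
  intro δ hδ
  set δ' := min δ (1/2) with hδ'_def
  have hδ'pos : 0 < δ' := lt_min hδ (by norm_num)
  have hδ'le : δ' ≤ δ := min_le_left _ _
  have hδ'lt1 : δ' < 1 := lt_of_le_of_lt (min_le_right _ _) (by norm_num)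
  set ε := δ'/9 with hε_def
  have hεpos : 0 < ε := by positivity
  have hε1 : ε < 1 := by
    rw [hε_def]; linarith
  obtain ⟨N, Φ, hΦ⟩ := exists_classifier ν hεpos hε1
  have hev : ∀ᶠ n in atTop, eqBox (μ n) ν (G n) H < ENNReal.ofReal ε :=
    hconv.eventually_lt_const (ENNReal.ofReal_pos.mpr hεpos)
  obtain ⟨n₀, hn₀⟩ := eventually_atTop.mp hev
  refine ⟨N, n₀, fun n hn T hTG hTdisc => ?_⟩
  have hbox := hn₀ n hn
  rw [eqBox] at hbox
  simp only [iInf_lt_iff] at hbox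
  obtain ⟨π, hπcoup, hπbox⟩ := hbox
  haveI hπprob : IsProbabilityMeasure π := by
    constructor
    have h1 : π.map Prod.fst = μ n := hπcoup.1
    have h2 : (π.map Prod.fst) Set.univ = π Set.univ := by
      rw [Measure.map_apply measurable_fst MeasurableSet.univ, Set.preimage_univ]
    rw [← h2, h1, measure_univ]
  have hsup1 : (⨆ g ∈ G n, ⨅ h ∈ H, dPi π g h) < ENNReal.ofReal ε :=
    lt_of_le_of_lt (le_max_left _ _) hπbox
  have hsel : ∀ g, g ∈ T → ∃ h, h ∈ H ∧ ∃ S : Set (X n × Y), IsClosed S ∧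
      π Sᶜ ≤ ENNReal.ofReal ε ∧
      (∀ p ∈ S, ∀ q ∈ S, |dist (g p.1) q.1 - dist (h p.2) q.2| ≤ ε) := by
    intro g hgT
    have h1 : (⨅ h ∈ H, dPi π g h) < ENNReal.ofReal ε :=
      lt_of_le_of_lt (le_iSup₂ (f := fun g (_ : g ∈ G n) => ⨅ h ∈ H, dPi π g h)
        g (hTG hgT)) hsup1
    simp only [iInf_lt_iff] at h1
    obtain ⟨h, hhH, hdpi⟩ := h1
    rw [dPi] at hdpi
    simp only [iInf_lt_iff] at hdpi
    obtain ⟨S, ⟨hScl, hSsupp⟩, hmax⟩ := hdpi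
    rw [max_lt_iff] at hmax
    refine ⟨h, hhH, S, hScl, ?_, ?_⟩
    · rw [prob_compl_eq_one_sub hScl.measurableSet]
      exact hmax.1.le
    · intro p hp q hq
      have hmem : (p, q) ∈ S ×ˢ S := Set.mem_prod.mpr ⟨hp, hq⟩
      have hterm : ENNReal.ofReal |dist (g p.1) q.1 - dist (h p.2) q.2| ≤
          dS S g h :=
        le_iSup₂ (f := fun (pq : (X n × Y) × (X n × Y)) (_ : pq ∈ S ×ˢ S) =>
          ENNReal.ofReal |dist (g pq.1.1) pq.2.1 - dist (h pq.1.2) pq.2.2|) (p, q) hmem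
      have := lt_of_le_of_lt hterm hmax.2
      exact ((ENNReal.ofReal_lt_ofReal_iff hεpos).mp this).le
  choose hfun hfunH Sfun hScl hπS hdSb using hsel
  set f : (X n → X n) → Fin N := fun g =>
    if hg : g ∈ T then Φ (hfun g hg) else Φ id with hf_def
  have hinj : Set.InjOn f T := by
    intro g₁ hg₁ g₂ hg₂ hf
    by_contra hne
    have hδle : δ ≤ kyFan (μ n) g₁ g₂ := hTdisc g₁ hg₁ g₂ hg₂ hne
    rw [hf_def] at hf
    simp only [dif_pos hg₁, dif_pos hg₂] at hf
    have hAut1 : IsAut ν (hfun g₁ hg₁) := hH.1 _ (hfunH g₁ hg₁)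
    have hAut2 : IsAut ν (hfun g₂ hg₂) := hH.1 _ (hfunH g₂ hg₂)
    have hν := hΦ _ _ hAut1.1 hAut1.2.2 hAut2.1 hAut2.2.2 hf
    have hπD : π {p : (X n) × Y | ε < dist (hfun g₁ hg₁ p.2) (hfun g₂ hg₂ p.2)} ≤
        ENNReal.ofReal ε := by
      have hop : MeasurableSet {y | ε < dist (hfun g₁ hg₁ y) (hfun g₂ hg₂ y)} :=
        (isOpen_lt continuous_const
          (Continuous.dist hAut1.1.continuous hAut2.1.continuous)).measurableSet
      have heq : {p : (X n) × Y | ε < dist (hfun g₁ hg₁ p.2) (hfun g₂ hg₂ p.2)} =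
          Prod.snd ⁻¹' {y | ε < dist (hfun g₁ hg₁ y) (hfun g₂ hg₂ y)} := rfl
      rw [heq, ← Measure.map_apply measurable_snd hop, hπcoup.2]
      exact hν
    have hAutg₂ : IsAut (μ n) g₂ := (hG n).1 _ (hTG hg₂)
    have hky := keyB (μ n) π hπcoup.1 hAutg₂.1.continuous hAutg₂.2.2
      hAut1.1.continuous hAut2.1.continuous hεpos hεpos
      (hScl g₁ hg₁) (hScl g₂ hg₂) (hπS g₁ hg₁) (hπS g₂ hg₂)
      (hdSb g₁ hg₁) (hdSb g₂ hg₂) hπD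
    have hlt : 6*ε + 2*ε < δ' := by rw [hε_def]; linarith
    linarith
  have hfin : T.Finite := Set.Finite.of_finite_image (Set.toFinite _) hinj
  refine ⟨hfin, ?_⟩
  calc T.ncard = (f '' T).ncard := (Set.ncard_image_of_injOn hinj).symm
    _ ≤ (Set.univ : Set (Fin N)).ncard :=
        Set.ncard_le_ncard (Set.subset_univ _) (Set.toFinite _)
    _ = N := by simp [Set.ncard_univ]

end
end

section
/- Let (X_n, G_n), n = 1,2,…, be mm-spaces with closed subgroups G_n ⊆ Aut(X_n), and let (Y, H) be an mm-space with a closed subgroup H ⊆ Aut(Y). If □((X_n,G_n),(Y,H)) → 0 as n → ∞, then the quotient mm-spaces satisfy □(X_n/G_n, Y/H) → 0, where □(·,·) between mm-spaces is the box distance □((·,{id}),(·,{id})). -/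
open MeasureTheory Metric Filter Set TopologicalSpace
open scoped ENNReal Topology

noncomputable section

lemma isClosed_msupport' {Z : Type*} [TopologicalSpace Z] [MeasurableSpace Z] (π : Measure Z) :
    IsClosed (msupport π) := by
  rw [← isOpen_compl_iff, isOpen_iff_forall_mem_open]
  intro z hz
  simp only [msupport, mem_compl_iff, mem_setOf_eq, not_forall] at hz
  obtain ⟨U, hU, hzU, hνU⟩ := hz
  exact ⟨U, fun w hw => by
    simp only [mem_compl_iff, msupport, mem_setOf_eq, not_forall]
    exact ⟨U, hU, hw, hνU⟩, hU, hzU⟩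

lemma msupport_compl_null {Z : Type*} [TopologicalSpace Z] [SecondCountableTopology Z]
    [MeasurableSpace Z] [OpensMeasurableSpace Z] (π : Measure Z) :
    π (msupport π)ᶜ = 0 := by
  have hsub : (msupport π)ᶜ ⊆ ⋃ U ∈ {U ∈ TopologicalSpace.countableBasis Z | π U = 0}, U := by
    intro z hz
    simp only [mem_compl_iff, msupport, mem_setOf_eq, not_forall] at hz
    obtain ⟨U, hU, hzU, hνU⟩ := hz
    have hU0 : π U = 0 := by simpa using hνU
    obtain ⟨V, hVB, hzV, hVU⟩ :=
      (TopologicalSpace.isBasis_countableBasis Z).exists_subset_of_mem_open hzU hU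
    exact mem_biUnion ⟨hVB, le_antisymm (hU0 ▸ measure_mono hVU) zero_le⟩ hzV
  refine measure_mono_null hsub ?_
  refine (measure_biUnion_null_iff ?_).2 (fun U hU => hU.2)
  exact (TopologicalSpace.countable_countableBasis Z).mono (sep_subset _ _)

lemma key_lemma
    {X Y Q R : Type*}
    [MetricSpace X] [SeparableSpace X] [MeasurableSpace X] [BorelSpace X]
    [MetricSpace Y] [SeparableSpace Y] [MeasurableSpace Y] [BorelSpace Y]
    [MetricSpace Q] [SeparableSpace Q] [MeasurableSpace Q] [BorelSpace Q]
    [MetricSpace R] [SeparableSpace R] [MeasurableSpace R] [BorelSpace R]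
    (μ : Measure X) [IsProbabilityMeasure μ]
    (ν : Measure Y) [IsProbabilityMeasure ν]
    (G : Set (X → X)) (H : Set (Y → Y))
    (hGaut : ∀ g ∈ G, Isometry g) (hGid : id ∈ G)
    (hHaut : ∀ h ∈ H, Isometry h) (hHid : id ∈ H)
    (q : X → Q) (r : Y → R)
    (hq_dist : ∀ x x' : X, dist (q x) (q x') = sInf ((fun g : X → X => dist (g x) x') '' G))
    (hr_dist : ∀ y y' : Y, dist (r y) (r y') = sInf ((fun h : Y → Y => dist (h y) y') '' H))
    (δ ρ ε₀ : ℝ) (hδ : 0 < δ) (hρ : 0 < ρ) (hε₀ : 0 < ε₀)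
    (N : ℕ) (e : ℕ → Y)
    (hnum : 9 * ε₀ + 8 * ρ ≤ δ)
    (hcov : ν (⋃ i ∈ Finset.range N, Metric.ball (e i) ρ)ᶜ + (N + 1) * ENNReal.ofReal ε₀
      ≤ ENNReal.ofReal δ)
    (hlt : eqBox μ ν G H < ENNReal.ofReal ε₀) :
    eqBox (μ.map q) (ν.map r) ({id} : Set (Q → Q)) ({id} : Set (R → R)) ≤ ENNReal.ofReal δ := by
  classical
  haveI : SecondCountableTopology X := UniformSpace.secondCountable_of_separable X
  haveI : SecondCountableTopology Y := UniformSpace.secondCountable_of_separable Y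
  haveI : SecondCountableTopology Q := UniformSpace.secondCountable_of_separable Q
  haveI : SecondCountableTopology R := UniformSpace.secondCountable_of_separable R
  -- continuity of q and r
  have hqlip : ∀ x x' : X, dist (q x) (q x') ≤ dist x x' := by
    intro x x'
    rw [hq_dist]
    exact csInf_le ⟨0, fun b ⟨g, hgm, hgb⟩ => hgb ▸ dist_nonneg⟩ ⟨id, hGid, rfl⟩
  have hrlip : ∀ y y' : Y, dist (r y) (r y') ≤ dist y y' := by
    intro y y'
    rw [hr_dist]
    exact csInf_le ⟨0, fun b ⟨h, hhm, hhb⟩ => hhb ▸ dist_nonneg⟩ ⟨id, hHid, rfl⟩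
  have hqcont : Continuous q :=
    (LipschitzWith.of_dist_le_mul (K := 1) (by simpa using hqlip)).continuous
  have hrcont : Continuous r :=
    (LipschitzWith.of_dist_le_mul (K := 1) (by simpa using hrlip)).continuous
  -- extract a coupling
  obtain ⟨π, hπ, hboxlt⟩ : ∃ π, π ∈ couplings μ ν ∧ boxPi π G H < ENNReal.ofReal ε₀ := by
    rw [eqBox] at hlt
    obtain ⟨π, hπ⟩ := iInf_lt_iff.mp hlt
    obtain ⟨hmem, hh⟩ := iInf_lt_iff.mp hπ
    exact ⟨π, hmem, hh⟩
  haveI hπprob : IsProbabilityMeasure π := by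
    constructor
    have h1 : π.map Prod.fst Set.univ = μ Set.univ := by rw [hπ.1]
    rw [Measure.map_apply measurable_fst MeasurableSet.univ, Set.preimage_univ] at h1
    rw [h1, measure_univ]
  -- the two half-correspondences
  have hext : ∀ (g : X → X) (h : Y → Y), dPi π g h < ENNReal.ofReal ε₀ →
      ∃ S, IsClosed S ∧ S ⊆ msupport π ∧ π Sᶜ < ENNReal.ofReal ε₀ ∧
      ∀ p1 ∈ S, ∀ p2 ∈ S, |dist (g p1.1) p2.1 - dist (h p1.2) p2.2| < ε₀ := by
    intro g h hd
    rw [dPi] at hd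
    obtain ⟨S, hS⟩ := iInf_lt_iff.mp hd
    obtain ⟨⟨hScl, hSsupp⟩, hmax⟩ := iInf_lt_iff.mp hS
    refine ⟨S, hScl, hSsupp, ?_, ?_⟩
    · have := (max_lt_iff.mp hmax).1
      have hcompl : π Sᶜ = 1 - π S := by
        rw [measure_compl hScl.measurableSet (measure_ne_top π S), measure_univ]
      rwa [hcompl]
    · intro p1 hp1 p2 hp2
      have hle : ENNReal.ofReal |dist (g p1.1) p2.1 - dist (h p1.2) p2.2| ≤ dS S g h := by
        have hmem : ((p1, p2) : (X × Y) × (X × Y)) ∈ S ×ˢ S := ⟨hp1, hp2⟩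
        simp only [dS]
        exact le_biSup
          (fun p : (X × Y) × (X × Y) =>
            ENNReal.ofReal |dist (g p.1.1) p.2.1 - dist (h p.1.2) p.2.2|) hmem
      have := lt_of_le_of_lt hle (max_lt_iff.mp hmax).2
      rwa [ENNReal.ofReal_lt_ofReal_iff hε₀] at this
  have hGH : ∀ g ∈ G, ∃ h ∈ H, ∃ S, IsClosed S ∧ S ⊆ msupport π ∧
      π Sᶜ < ENNReal.ofReal ε₀ ∧
      ∀ p1 ∈ S, ∀ p2 ∈ S, |dist (g p1.1) p2.1 - dist (h p1.2) p2.2| < ε₀ := by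
    intro g hg
    have h1 : (⨆ g ∈ G, ⨅ h ∈ H, dPi π g h) < ENNReal.ofReal ε₀ := (max_lt_iff.mp hboxlt).1
    have h2 : (⨅ h ∈ H, dPi π g h) < ENNReal.ofReal ε₀ :=
      lt_of_le_of_lt (le_biSup (fun g => ⨅ h ∈ H, dPi π g h) hg) h1
    obtain ⟨h, hh⟩ := iInf_lt_iff.mp h2
    obtain ⟨hhH, hd⟩ := iInf_lt_iff.mp hh
    exact ⟨h, hhH, hext g h hd⟩
  have hHG : ∀ h ∈ H, ∃ g ∈ G, ∃ S, IsClosed S ∧ S ⊆ msupport π ∧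
      π Sᶜ < ENNReal.ofReal ε₀ ∧
      ∀ p1 ∈ S, ∀ p2 ∈ S, |dist (g p1.1) p2.1 - dist (h p1.2) p2.2| < ε₀ := by
    intro h hh
    have h1 : (⨆ h ∈ H, ⨅ g ∈ G, dPi π g h) < ENNReal.ofReal ε₀ := (max_lt_iff.mp hboxlt).2
    have h2 : (⨅ g ∈ G, dPi π g h) < ENNReal.ofReal ε₀ :=
      lt_of_le_of_lt (le_biSup (fun h => ⨅ g ∈ G, dPi π g h) hh) h1
    obtain ⟨g, hg⟩ := iInf_lt_iff.mp h2
    obtain ⟨hgG, hd⟩ := iInf_lt_iff.mp hg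
    exact ⟨g, hgG, hext g h hd⟩
  -- data for g = id
  obtain ⟨h₀, hh₀H, S₀, hS₀cl, hS₀supp, hS₀meas, hS₀pair⟩ := hGH id hGid
  have hdisp : ∀ p ∈ S₀, dist (h₀ p.2) p.2 < ε₀ := by
    intro p hp
    have := hS₀pair p hp p hp
    simp only [id_eq, dist_self, zero_sub, abs_neg, abs_of_nonneg dist_nonneg] at this
    exact this
  set rs : ℝ := 2 * ρ + 2 * ε₀ with hrs
  set W : Set Y := ⋃ i ∈ Finset.range N, Metric.ball (e i) ρ with hWdef
  set E : ℕ → Set (X × Y) := fun i => S₀ ∩ (Prod.snd ⁻¹' Metric.ball (e i) ρ) with hEdef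
  set A : Set (X × Y) := {p | π (Metric.closedBall p rs) < ENNReal.ofReal ε₀} with hAdef
  set D : Set (X × Y) := msupport π ∩ Aᶜ with hDdef
  -- diameters of the E i
  have hEdiam : ∀ i, ∀ p ∈ E i, ∀ p' ∈ E i, dist p' p ≤ rs := by
    intro i p hp p' hp'
    obtain ⟨hpS, hpb⟩ := hp
    obtain ⟨hp'S, hp'b⟩ := hp'
    have hy : dist p'.2 p.2 < 2 * ρ := by
      have h1 : dist p'.2 (e i) < ρ := hp'b
      have h2 : dist p.2 (e i) < ρ := hpb
      calc dist p'.2 p.2 ≤ dist p'.2 (e i) + dist (e i) p.2 := dist_triangle _ _ _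
        _ < ρ + ρ := by rw [dist_comm (e i)]; linarith
        _ = 2 * ρ := by ring
    have hx : dist p'.1 p.1 < rs := by
      have h1 := hS₀pair p' hp'S p hpS
      simp only [id_eq] at h1
      have h2 : dist p'.1 p.1 < dist (h₀ p'.2) p.2 + ε₀ := by
        have := abs_lt.mp h1
        linarith [this.1]
      have h3 : dist (h₀ p'.2) p.2 ≤ dist (h₀ p'.2) p'.2 + dist p'.2 p.2 := dist_triangle _ _ _
      have h4 := hdisp p' hp'S
      rw [hrs]; linarith
    rw [Prod.dist_eq]
    exact max_le (le_of_lt hx) (by rw [hrs]; nlinarith)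
  -- measure of A
  have hAbound : π A ≤ ν Wᶜ + (N + 1) * ENNReal.ofReal ε₀ := by
    set Bad : ℕ → Set (X × Y) := fun i =>
      if π (E i) < ENNReal.ofReal ε₀ then E i else ∅ with hBad
    have hsub : A ⊆ S₀ᶜ ∪ (Prod.snd ⁻¹' Wᶜ ∪ ⋃ i ∈ Finset.range N, Bad i) := by
      intro p hpA
      by_cases hpS : p ∈ S₀
      · by_cases hpW : p.2 ∈ W
        · obtain ⟨i, hiN, hpb⟩ := mem_iUnion₂.mp hpW
          have hpE : p ∈ E i := ⟨hpS, hpb⟩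
          by_cases hEi : π (E i) < ENNReal.ofReal ε₀
          · refine Or.inr (Or.inr (mem_biUnion hiN ?_))
            simp only [hBad, if_pos hEi]; exact hpE
          · exfalso
            have hsub' : E i ⊆ Metric.closedBall p rs := fun p' hp' =>
              Metric.mem_closedBall.mpr (hEdiam i p hpE p' hp')
            exact hEi (lt_of_le_of_lt (measure_mono hsub') hpA)
        · exact Or.inr (Or.inl hpW)
      · exact Or.inl hpS
    have hW_meas : MeasurableSet W := (isOpen_biUnion fun i _ => Metric.isOpen_ball).measurableSet
    have hWc : π (Prod.snd ⁻¹' Wᶜ) = ν Wᶜ := by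
      rw [← hπ.2, Measure.map_apply measurable_snd hW_meas.compl]
    have hBadle : ∀ i, π (Bad i) ≤ ENNReal.ofReal ε₀ := by
      intro i
      by_cases h : π (E i) < ENNReal.ofReal ε₀
      · simp only [hBad, if_pos h]; exact le_of_lt h
      · simp only [hBad, if_neg h, measure_empty]; exact zero_le
    calc π A ≤ π (S₀ᶜ ∪ (Prod.snd ⁻¹' Wᶜ ∪ ⋃ i ∈ Finset.range N, Bad i)) := measure_mono hsub
      _ ≤ π S₀ᶜ + π (Prod.snd ⁻¹' Wᶜ ∪ ⋃ i ∈ Finset.range N, Bad i) := measure_union_le _ _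
      _ ≤ π S₀ᶜ + (π (Prod.snd ⁻¹' Wᶜ) + π (⋃ i ∈ Finset.range N, Bad i)) := by
          exact add_le_add le_rfl (measure_union_le _ _)
      _ ≤ ENNReal.ofReal ε₀ + (ν Wᶜ + ∑ i ∈ Finset.range N, π (Bad i)) := by
          refine add_le_add (le_of_lt hS₀meas) (add_le_add ?_ ?_)
          · rw [hWc]
          · exact measure_biUnion_finset_le _ _
      _ ≤ ENNReal.ofReal ε₀ + (ν Wᶜ + N * ENNReal.ofReal ε₀) := by
          refine add_le_add le_rfl (add_le_add le_rfl ?_)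
          calc ∑ i ∈ Finset.range N, π (Bad i) ≤ ∑ i ∈ Finset.range N, ENNReal.ofReal ε₀ :=
                Finset.sum_le_sum fun i _ => hBadle i
            _ = N * ENNReal.ofReal ε₀ := by
                rw [Finset.sum_const, Finset.card_range, nsmul_eq_mul]
      _ = ν Wᶜ + (N + 1) * ENNReal.ofReal ε₀ := by ring
  -- complement of D is small
  have hDcompl : π Dᶜ ≤ ENNReal.ofReal δ := by
    have h1 : Dᶜ = (msupport π)ᶜ ∪ A := by
      rw [hDdef, compl_inter, compl_compl]
    rw [h1]
    calc π ((msupport π)ᶜ ∪ A) ≤ π (msupport π)ᶜ + π A := measure_union_le _ _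
      _ = π A := by rw [msupport_compl_null π, zero_add]
      _ ≤ ν Wᶜ + (N + 1) * ENNReal.ofReal ε₀ := hAbound
      _ ≤ ENNReal.ofReal δ := hcov
  -- near points in good sets
  have hnear : ∀ p ∉ A, ∀ S : Set (X × Y), π Sᶜ < ENNReal.ofReal ε₀ →
      ∃ p', p' ∈ S ∧ dist p'.1 p.1 ≤ rs ∧ dist p'.2 p.2 ≤ rs := by
    intro p hp S hS
    by_contra hcon
    push_neg at hcon
    have hsub : Metric.closedBall p rs ⊆ Sᶜ := by
      intro z hz
      intro hzS
      have hd : dist z p ≤ rs := Metric.mem_closedBall.mp hz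
      rw [Prod.dist_eq] at hd
      exact absurd (hcon z hzS (le_trans (le_max_left _ _) hd))
        (by simp [le_trans (le_max_right _ _) hd])
    have : π (Metric.closedBall p rs) < ENNReal.ofReal ε₀ :=
      lt_of_le_of_lt (measure_mono hsub) hS
    exact hp this
  -- one-sided estimates
  have hQle : ∀ p1 ∉ A, ∀ p2 ∉ A, ∀ h ∈ H,
      dist (q p1.1) (q p2.1) ≤ dist (h p1.2) p2.2 + (ε₀ + 4 * rs) := by
    intro p1 hp1 p2 hp2 h hh
    obtain ⟨g, hgG, S, _, _, hSm, hSpair⟩ := hHG h hh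
    obtain ⟨p1', hp1'S, h11, h12⟩ := hnear p1 hp1 S hSm
    obtain ⟨p2', hp2'S, h21, h22⟩ := hnear p2 hp2 S hSm
    have hgiso := hGaut g hgG
    have hhiso := hHaut h hh
    have hq1 : dist (q p1.1) (q p2.1) ≤ dist (g p1.1) p2.1 := by
      rw [hq_dist]
      exact csInf_le ⟨0, fun b ⟨g', _, hgb⟩ => hgb ▸ dist_nonneg⟩ ⟨g, hgG, rfl⟩
    have hpair := hSpair p1' hp1'S p2' hp2'S
    have hpair' : dist (g p1'.1) p2'.1 < dist (h p1'.2) p2'.2 + ε₀ := by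
      have := abs_lt.mp hpair; linarith [this.1, this.2]
    have t1 : dist (g p1.1) p2.1 ≤ dist (g p1'.1) p2'.1 + 2 * rs := by
      have h4 : dist (g p1.1) p2.1 ≤
          dist (g p1.1) (g p1'.1) + dist (g p1'.1) p2'.1 + dist p2'.1 p2.1 :=
        dist_triangle4 _ _ _ _
      rw [hgiso.dist_eq] at h4
      have h5 : dist p1.1 p1'.1 ≤ rs := by rw [dist_comm]; exact h11
      linarith
    have t2 : dist (h p1'.2) p2'.2 ≤ dist (h p1.2) p2.2 + 2 * rs := by
      have h4 : dist (h p1'.2) p2'.2 ≤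
          dist (h p1'.2) (h p1.2) + dist (h p1.2) p2.2 + dist p2.2 p2'.2 :=
        dist_triangle4 _ _ _ _
      rw [hhiso.dist_eq] at h4
      have h5 : dist p2.2 p2'.2 ≤ rs := by rw [dist_comm]; exact h22
      linarith
    linarith
  have hRle : ∀ p1 ∉ A, ∀ p2 ∉ A, ∀ g ∈ G,
      dist (r p1.2) (r p2.2) ≤ dist (g p1.1) p2.1 + (ε₀ + 4 * rs) := by
    intro p1 hp1 p2 hp2 g hg
    obtain ⟨h, hhH, S, _, _, hSm, hSpair⟩ := hGH g hg
    obtain ⟨p1', hp1'S, h11, h12⟩ := hnear p1 hp1 S hSm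
    obtain ⟨p2', hp2'S, h21, h22⟩ := hnear p2 hp2 S hSm
    have hgiso := hGaut g hg
    have hhiso := hHaut h hhH
    have hr1 : dist (r p1.2) (r p2.2) ≤ dist (h p1.2) p2.2 := by
      rw [hr_dist]
      exact csInf_le ⟨0, fun b ⟨h', _, hhb⟩ => hhb ▸ dist_nonneg⟩ ⟨h, hhH, rfl⟩
    have hpair := hSpair p1' hp1'S p2' hp2'S
    have hpair' : dist (h p1'.2) p2'.2 < dist (g p1'.1) p2'.1 + ε₀ := by
      have := abs_lt.mp hpair; linarith [this.1, this.2]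
    have t1 : dist (h p1.2) p2.2 ≤ dist (h p1'.2) p2'.2 + 2 * rs := by
      have h4 : dist (h p1.2) p2.2 ≤
          dist (h p1.2) (h p1'.2) + dist (h p1'.2) p2'.2 + dist p2'.2 p2.2 :=
        dist_triangle4 _ _ _ _
      rw [hhiso.dist_eq] at h4
      have h5 : dist p1.2 p1'.2 ≤ rs := by rw [dist_comm]; exact h12
      linarith
    have t2 : dist (g p1'.1) p2'.1 ≤ dist (g p1.1) p2.1 + 2 * rs := by
      have h4 : dist (g p1'.1) p2'.1 ≤
          dist (g p1'.1) (g p1.1) + dist (g p1.1) p2.1 + dist p2.1 p2'.1 :=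
        dist_triangle4 _ _ _ _
      rw [hgiso.dist_eq] at h4
      have h5 : dist p2.1 p2'.1 ≤ rs := by rw [dist_comm]; exact h21
      linarith
    linarith
  -- the key two-sided estimate on D
  have hkey : ∀ p1 ∈ D, ∀ p2 ∈ D,
      |dist (q p1.1) (q p2.1) - dist (r p1.2) (r p2.2)| ≤ ε₀ + 4 * rs := by
    intro p1 hp1 p2 hp2
    have hp1A : p1 ∉ A := hp1.2
    have hp2A : p2 ∉ A := hp2.2
    have ha1 : dist (q p1.1) (q p2.1) ≤ dist (r p1.2) (r p2.2) + (ε₀ + 4 * rs) := by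
      have hs : dist (q p1.1) (q p2.1) - (ε₀ + 4 * rs) ≤
          sInf ((fun h : Y → Y => dist (h p1.2) p2.2) '' H) := by
        refine le_csInf ⟨_, ⟨id, hHid, rfl⟩⟩ ?_
        rintro b ⟨h, hh, rfl⟩
        have := hQle p1 hp1A p2 hp2A h hh
        simp only
        linarith
      rw [← hr_dist] at hs
      linarith
    have ha2 : dist (r p1.2) (r p2.2) ≤ dist (q p1.1) (q p2.1) + (ε₀ + 4 * rs) := by
      have hs : dist (r p1.2) (r p2.2) - (ε₀ + 4 * rs) ≤
          sInf ((fun g : X → X => dist (g p1.1) p2.1) '' G) := by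
        refine le_csInf ⟨_, ⟨id, hGid, rfl⟩⟩ ?_
        rintro b ⟨g, hg, rfl⟩
        have := hRle p1 hp1A p2 hp2A g hg
        simp only
        linarith
      rw [← hq_dist] at hs
      linarith
    rw [abs_sub_le_iff]
    constructor <;> linarith
  -- push forward
  have hmeasqr : Measurable (Prod.map q r) :=
    (hqcont.measurable.comp measurable_fst).prodMk (hrcont.measurable.comp measurable_snd)
  have hcontqr : Continuous (Prod.map q r) := hqcont.prodMap hrcont
  set πQ : Measure (Q × R) := π.map (Prod.map q r) with hπQdef
  haveI : IsProbabilityMeasure πQ := Measure.isProbabilityMeasure_map hmeasqr.aemeasurable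
  have hπQ : πQ ∈ couplings (μ.map q) (ν.map r) := by
    constructor
    · rw [hπQdef, Measure.map_map measurable_fst hmeasqr]
      have he : (Prod.fst ∘ Prod.map q r : X × Y → Q) = q ∘ Prod.fst := rfl
      rw [he, ← Measure.map_map hqcont.measurable measurable_fst, hπ.1]
    · rw [hπQdef, Measure.map_map measurable_snd hmeasqr]
      have he : (Prod.snd ∘ Prod.map q r : X × Y → R) = r ∘ Prod.snd := rfl
      rw [he, ← Measure.map_map hrcont.measurable measurable_snd, hπ.2]
  set Sh : Set (Q × R) := closure (Prod.map q r '' D) with hShdef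
  have hShcl : IsClosed Sh := isClosed_closure
  have hShsupp : Sh ⊆ msupport πQ := by
    refine closure_minimal ?_ (isClosed_msupport' _)
    rintro z ⟨p, hpD, rfl⟩
    intro U hU hmemU
    rw [hπQdef, Measure.map_apply hmeasqr hU.measurableSet]
    exact hpD.1 _ (hU.preimage hcontqr) hmemU
  have hShmeas : 1 - πQ Sh ≤ ENNReal.ofReal δ := by
    have h1 : πQ Shᶜ ≤ ENNReal.ofReal δ := by
      rw [hπQdef, Measure.map_apply hmeasqr hShcl.measurableSet.compl]
      refine le_trans (measure_mono ?_) hDcompl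
      rw [preimage_compl, compl_subset_compl]
      exact subset_trans (subset_preimage_image _ _) (preimage_mono subset_closure)
    have h2 : πQ Shᶜ = 1 - πQ Sh := by
      rw [measure_compl hShcl.measurableSet (measure_ne_top πQ Sh), measure_univ]
    rwa [h2] at h1
  have hdSbound : dS Sh (id : Q → Q) (id : R → R) ≤ ENNReal.ofReal δ := by
    rw [dS]
    refine iSup₂_le ?_
    rintro pp hpp
    refine le_trans (ENNReal.ofReal_le_ofReal ?_) (le_refl _)
    have hC : IsClosed {pp : (Q × R) × (Q × R) |
        |dist pp.1.1 pp.2.1 - dist pp.1.2 pp.2.2| ≤ ε₀ + 4 * rs} := by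
      refine isClosed_le ?_ continuous_const
      refine Continuous.abs (Continuous.sub ?_ ?_)
      · exact (continuous_fst.fst).dist (continuous_snd.fst)
      · exact (continuous_fst.snd).dist (continuous_snd.snd)
    have himg : (Prod.map q r '' D) ×ˢ (Prod.map q r '' D) ⊆
        {pp : (Q × R) × (Q × R) | |dist pp.1.1 pp.2.1 - dist pp.1.2 pp.2.2| ≤ ε₀ + 4 * rs} := by
      rintro ⟨z1, z2⟩ ⟨⟨p1, hp1, rfl⟩, ⟨p2, hp2, rfl⟩⟩
      exact hkey p1 hp1 p2 hp2
    have hsub2 : Sh ×ˢ Sh ⊆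
        {pp : (Q × R) × (Q × R) | |dist pp.1.1 pp.2.1 - dist pp.1.2 pp.2.2| ≤ ε₀ + 4 * rs} := by
      rw [hShdef, ← closure_prod_eq]
      exact closure_minimal himg hC
    have hin := hsub2 hpp
    simp only [mem_setOf_eq, id_eq] at hin ⊢
    have : ε₀ + 4 * rs ≤ δ := by rw [hrs]; linarith
    linarith
  -- conclusion
  have hfinal : eqBox (μ.map q) (ν.map r) ({id} : Set (Q → Q)) ({id} : Set (R → R)) ≤
      boxPi πQ ({id} : Set (Q → Q)) ({id} : Set (R → R)) := by
    rw [eqBox]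
    exact iInf₂_le πQ hπQ
  have hbox2 : boxPi πQ ({id} : Set (Q → Q)) ({id} : Set (R → R)) = dPi πQ id id := by
    rw [boxPi]
    simp
  have hdPile : dPi πQ id id ≤ max (1 - πQ Sh) (dS Sh id id) := by
    rw [dPi]
    exact iInf₂_le Sh ⟨hShcl, hShsupp⟩
  calc eqBox (μ.map q) (ν.map r) ({id} : Set (Q → Q)) ({id} : Set (R → R)) ≤
      boxPi πQ ({id} : Set (Q → Q)) ({id} : Set (R → R)) := hfinal
    _ = dPi πQ id id := hbox2
    _ ≤ max (1 - πQ Sh) (dS Sh id id) := hdPile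
    _ ≤ ENNReal.ofReal δ := max_le hShmeas hdSbound





/-- if `(Xₙ,Gₙ)` equivariantly box converges to `(Y,H)`, then the
quotient mm-spaces (here represented by arbitrary metric realizations `Qₙ`, `R`
of `Xₙ/Gₙ`, `Y/H` with the quotient metric and pushforward measure) box converge. -/
theorem stmt_14 (X : ℕ → Type*) [∀ n, MetricSpace (X n)] [∀ n, CompleteSpace (X n)]
    [∀ n, SeparableSpace (X n)] [∀ n, MeasurableSpace (X n)] [∀ n, BorelSpace (X n)]
    (μ : ∀ n, Measure (X n)) [∀ n, IsProbabilityMeasure (μ n)]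
    [∀ n, (μ n).IsOpenPosMeasure]
    (G : ∀ n, Set (X n → X n)) (hG : ∀ n, IsClosedAutSubgroup (μ n) (G n))
    {Y : Type*} [MetricSpace Y] [CompleteSpace Y] [SeparableSpace Y] [MeasurableSpace Y] [BorelSpace Y]
    (ν : Measure Y) [IsProbabilityMeasure ν] [ν.IsOpenPosMeasure]
    (H : Set (Y → Y)) (hH : IsClosedAutSubgroup ν H)
    (hconv : Tendsto (fun n => eqBox (μ n) ν (G n) H) atTop (𝓝 0))
    -- `Q n` realizes the quotient `X n / G n`:
    (Q : ℕ → Type*) [∀ n, MetricSpace (Q n)] [∀ n, MeasurableSpace (Q n)]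
    [∀ n, BorelSpace (Q n)]
    (q : ∀ n, X n → Q n) (hq_surj : ∀ n, Function.Surjective (q n))
    (hq_dist : ∀ n, ∀ x x' : X n,
      dist (q n x) (q n x') = sInf ((fun g : X n → X n => dist (g x) x') '' G n))
    -- `R` realizes the quotient `Y / H`:
    (R : Type*) [MetricSpace R] [MeasurableSpace R] [BorelSpace R]
    (r : Y → R) (hr_surj : Function.Surjective r)
    (hr_dist : ∀ y y' : Y,
      dist (r y) (r y') = sInf ((fun h : Y → Y => dist (h y) y') '' H)) :
    Tendsto (fun n => eqBox (Measure.map (q n) (μ n)) (Measure.map r ν)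
      ({id} : Set (Q n → Q n)) ({id} : Set (R → R))) atTop (𝓝 0) := by
  rw [ENNReal.tendsto_nhds_zero]
  intro ε hε
  have hmin_pos : 0 < min 1 ε := lt_min one_pos hε
  have hmin_ne_top : min 1 ε ≠ ⊤ := ne_top_of_le_ne_top (by simp) (min_le_left _ _)
  set δ : ℝ := (min 1 ε).toReal with hδdef
  have hδpos : 0 < δ := ENNReal.toReal_pos hmin_pos.ne' hmin_ne_top
  have hδle : ENNReal.ofReal δ ≤ ε := by
    rw [hδdef, ENNReal.ofReal_toReal hmin_ne_top]; exact min_le_right _ _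
  -- continuity of the quotient maps
  have hqcont : ∀ n, Continuous (q n) := by
    intro n
    have hlip : ∀ x x', dist (q n x) (q n x') ≤ dist x x' := fun x x' => by
      rw [hq_dist n]
      exact csInf_le ⟨0, fun b ⟨g, hgm, hgb⟩ => hgb ▸ dist_nonneg⟩ ⟨id, (hG n).2.1, rfl⟩
    exact (LipschitzWith.of_dist_le_mul (K := 1) (by simpa using hlip)).continuous
  have hrcont : Continuous r := by
    have hlip : ∀ y y', dist (r y) (r y') ≤ dist y y' := fun y y' => by
      rw [hr_dist]
      exact csInf_le ⟨0, fun b ⟨h, hhm, hhb⟩ => hhb ▸ dist_nonneg⟩ ⟨id, hH.2.1, rfl⟩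
    exact (LipschitzWith.of_dist_le_mul (K := 1) (by simpa using hlip)).continuous
  haveI hQsep : ∀ n, SeparableSpace (Q n) := fun n =>
    ((hq_surj n).denseRange).separableSpace (hqcont n)
  haveI : SeparableSpace R := (hr_surj.denseRange).separableSpace hrcont
  -- Y is nonempty
  haveI : Nonempty Y := by
    by_contra hne
    rw [not_nonempty_iff] at hne
    have h1 : ν Set.univ = 1 := measure_univ
    rw [Set.univ_eq_empty_iff.mpr hne, measure_empty] at h1
    exact zero_ne_one h1
  -- a finite almost-covering of Y by ρ-balls
  set e : ℕ → Y := TopologicalSpace.denseSeq Y with hedef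
  set ρ : ℝ := δ / 16 with hρdef
  have hρpos : 0 < ρ := by positivity
  obtain ⟨N, hN⟩ : ∃ N,
      ν (⋃ i ∈ Finset.range N, Metric.ball (e i) ρ)ᶜ ≤ ENNReal.ofReal (δ / 2) := by
    have hmono : Monotone (fun n => ⋃ i ∈ Finset.range n, Metric.ball (e i) ρ) := by
      intro a b hab
      exact Set.biUnion_subset_biUnion_left (fun i hi =>
        Finset.mem_range.mpr (lt_of_lt_of_le (Finset.mem_range.mp hi) hab))
    have huniv : (⋃ n, ⋃ i ∈ Finset.range n, Metric.ball (e i) ρ) = Set.univ := by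
      ext y
      simp only [mem_iUnion, mem_univ, iff_true, Finset.mem_range]
      obtain ⟨i, hi⟩ := (denseRange_denseSeq Y).exists_dist_lt y hρpos
      exact ⟨i + 1, i, Nat.lt_succ_self i, Metric.mem_ball.mpr hi⟩
    have htend := tendsto_measure_iUnion_atTop (μ := ν) hmono
    rw [huniv, measure_univ] at htend
    have hlt1 : (1 : ℝ≥0∞) - ENNReal.ofReal (δ / 2) < 1 :=
      ENNReal.sub_lt_self ENNReal.one_ne_top one_ne_zero
        (by simp only [ne_eq, ENNReal.ofReal_eq_zero, not_le]; positivity)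
    obtain ⟨N, hN⟩ := (htend.eventually_const_lt hlt1).exists
    refine ⟨N, ?_⟩
    have hWm : MeasurableSet (⋃ i ∈ Finset.range N, Metric.ball (e i) ρ) :=
      (isOpen_biUnion fun i _ => Metric.isOpen_ball).measurableSet
    rw [measure_compl hWm (measure_ne_top _ _), measure_univ]
    exact tsub_le_iff_right.mpr (tsub_le_iff_left.mp hN.le)
  set ε₀ : ℝ := min (δ / 18) (δ / (2 * (N + 1))) with hε₀def
  have hε₀pos : 0 < ε₀ := lt_min (by positivity) (by positivity)
  have hnum : 9 * ε₀ + 8 * ρ ≤ δ := by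
    have h1 : ε₀ ≤ δ / 18 := min_le_left _ _
    rw [hρdef]; linarith
  have hcov : ν (⋃ i ∈ Finset.range N, Metric.ball (e i) ρ)ᶜ +
      (N + 1) * ENNReal.ofReal ε₀ ≤ ENNReal.ofReal δ := by
    have h1 : ((N : ℝ≥0∞) + 1) * ENNReal.ofReal ε₀ ≤ ENNReal.ofReal (δ / 2) := by
      have hcast : ((N : ℝ≥0∞) + 1) = ENNReal.ofReal ((N : ℝ) + 1) := by
        rw [ENNReal.ofReal_add (by positivity) zero_le_one, ENNReal.ofReal_natCast,
          ENNReal.ofReal_one]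
      rw [hcast, ← ENNReal.ofReal_mul (by positivity)]
      apply ENNReal.ofReal_le_ofReal
      have h2 : ε₀ ≤ δ / (2 * ((N : ℝ) + 1)) := min_le_right _ _
      have h3 : (0 : ℝ) < (N : ℝ) + 1 := by positivity
      calc ((N : ℝ) + 1) * ε₀ ≤ ((N : ℝ) + 1) * (δ / (2 * ((N : ℝ) + 1))) :=
            mul_le_mul_of_nonneg_left h2 h3.le
        _ = δ / 2 := by field_simp
    calc ν (⋃ i ∈ Finset.range N, Metric.ball (e i) ρ)ᶜ + (N + 1) * ENNReal.ofReal ε₀ ≤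
        ENNReal.ofReal (δ / 2) + ENNReal.ofReal (δ / 2) := add_le_add hN h1
      _ = ENNReal.ofReal δ := by
          rw [← ENNReal.ofReal_add (by positivity) (by positivity)]
          norm_num
  have hev := hconv.eventually_lt_const
    (show (0 : ℝ≥0∞) < ENNReal.ofReal ε₀ by
      simp only [ENNReal.ofReal_pos]; exact hε₀pos)
  rw [eventually_atTop] at hev ⊢
  obtain ⟨M, hM⟩ := hev
  refine ⟨M, fun n hn => ?_⟩
  have hstep := key_lemma (μ n) ν (G n) H
    (fun g hg => ((hG n).1 g hg).1) (hG n).2.1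
    (fun h hh => (hH.1 h hh).1) hH.2.1
    (q n) r (hq_dist n) hr_dist δ ρ ε₀ hδpos hρpos hε₀pos N e hnum hcov (hM n hn)
  exact le_trans hstep hδle

end
end

section
/- Let X be a separable metric space. Then every sequence (S_n) of closed subsets of X admits a subsequence that converges in the weak Hausdorff sense to some closed subset S ⊆ X (possibly empty). -/
open MeasureTheory Metric Filter Set TopologicalSpace
open scoped ENNReal Topology

noncomputable section

private lemma limsup_add_const' (f : ℕ → ℝ≥0∞) (c : ℝ≥0∞) :
    Filter.limsup (fun n => f n + c) atTop = Filter.limsup f atTop + c := by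
  have hm : Monotone (fun x : ℝ≥0∞ => x + c) := fun a b h => add_le_add_left h c
  simpa [Function.comp_def] using
    (hm.map_limsup_of_continuousAt f ((continuous_add_right c).continuousAt)).symm

private lemma liminf_add_const' (f : ℕ → ℝ≥0∞) (c : ℝ≥0∞) :
    Filter.liminf (fun n => f n + c) atTop = Filter.liminf f atTop + c := by
  have hm : Monotone (fun x : ℝ≥0∞ => x + c) := fun a b h => add_le_add_left h c
  simpa [Function.comp_def] using
    (hm.map_liminf_of_continuousAt f ((continuous_add_right c).continuousAt)).symm

/-- sequential compactness for the weak Hausdorff convergence: any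
sequence of closed subsets of a separable metric space has a subsequence converging
weakly Hausdorff to a closed (possibly empty) subset. -/
theorem stmt_17 {X : Type*} [MetricSpace X] [SeparableSpace X]
    (S : ℕ → Set X) (hS : ∀ n, IsClosed (S n)) :
    ∃ ι : ℕ → ℕ, StrictMono ι ∧
      ∃ T : Set X, IsClosed T ∧ WeakHausTendsto (fun j => S (ι j)) T := by
  rcases isEmpty_or_nonempty X with h | h
  · exact ⟨id, strictMono_id, ∅, isClosed_empty,
      fun x _ => (IsEmpty.false x).elim, fun x _ => (IsEmpty.false x).elim⟩
  · set D := TopologicalSpace.denseSeq X with hDdef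
    have hD : DenseRange D := TopologicalSpace.denseRange_denseSeq X
    obtain ⟨L, ι, hι, hL⟩ := SeqCompactSpace.tendsto_subseq
      (fun n k => EMetric.infEdist (D k) (S n))
    have hLk : ∀ k, Tendsto (fun j => EMetric.infEdist (D k) (S (ι j))) atTop (𝓝 (L k)) :=
      fun k => tendsto_pi_nhds.mp hL k
    set e : X → ℕ → ℝ≥0∞ := fun x j => EMetric.infEdist x (S (ι j)) with he
    have step : ∀ x y : X, limsup (e x) atTop ≤ limsup (e y) atTop + edist x y := by
      intro x y
      calc limsup (e x) atTop ≤ limsup (fun j => e y j + edist x y) atTop :=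
            limsup_le_limsup (Eventually.of_forall fun j => EMetric.infEdist_le_infEdist_add_edist)
        _ = limsup (e y) atTop + edist x y := limsup_add_const' _ _
    have stepinf : ∀ x y : X, liminf (e x) atTop ≤ liminf (e y) atTop + edist x y := by
      intro x y
      calc liminf (e x) atTop ≤ liminf (fun j => e y j + edist x y) atTop :=
            liminf_le_liminf (Eventually.of_forall fun j => EMetric.infEdist_le_infEdist_add_edist)
        _ = liminf (e y) atTop + edist x y := liminf_add_const' _ _
    have key : ∀ x, limsup (e x) atTop ≤ liminf (e x) atTop := by
      intro x
      refine ENNReal.le_of_forall_pos_le_add fun ε hε _ => ?_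
      have hhalf : (0 : ℝ≥0∞) < ↑ε / 2 :=
        ENNReal.div_pos (by exact_mod_cast hε.ne') (by norm_num)
      obtain ⟨y, ⟨k, rfl⟩, hk⟩ := EMetric.mem_closure_iff.mp (hD x) (↑ε / 2) hhalf
      calc limsup (e x) atTop ≤ limsup (e (D k)) atTop + edist x (D k) := step x (D k)
        _ = L k + edist x (D k) := by rw [(hLk k).limsup_eq]
        _ = liminf (e (D k)) atTop + edist x (D k) := by rw [(hLk k).liminf_eq]
        _ ≤ (liminf (e x) atTop + edist (D k) x) + edist x (D k) :=
            add_le_add_left (stepinf (D k) x) _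
        _ ≤ (liminf (e x) atTop + ↑ε / 2) + ↑ε / 2 := by
            have h1 : edist (D k) x ≤ ↑ε / 2 := by rw [edist_comm]; exact hk.le
            exact add_le_add (add_le_add_right h1 _) hk.le
        _ = liminf (e x) atTop + ↑ε := by rw [add_assoc, ENNReal.add_halves]
    refine ⟨ι, hι, {x | limsup (e x) atTop = 0}, ?_, ?_, ?_⟩
    · refine isClosed_of_closure_subset fun x hx => ?_
      refine le_antisymm ?_ zero_le
      refine ENNReal.le_of_forall_pos_le_add fun ε hε _ => ?_
      obtain ⟨y, hyT, hy⟩ := EMetric.mem_closure_iff.mp hx (↑ε) (by exact_mod_cast hε)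
      calc limsup (e x) atTop ≤ limsup (e y) atTop + edist x y := step x y
        _ = 0 + edist x y := by rw [hyT]
        _ ≤ 0 + ↑ε := by rw [zero_add, zero_add]; exact hy.le
    · intro x hx
      have h1 : liminf (e x) atTop = 0 :=
        le_antisymm (hx ▸ liminf_le_limsup) zero_le
      exact tendsto_of_liminf_eq_limsup h1 hx
    · intro x hx
      have h1 : liminf (e x) atTop = limsup (e x) atTop :=
        le_antisymm liminf_le_limsup (key x)
      have h2 : limsup (e x) atTop ≠ 0 := hx
      rw [pos_iff_ne_zero, h1]
      exact h2


end
end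

section
/- Let X be a complete separable metric space, let S, S_n ⊆ X (n ∈ ℕ) be closed subsets, and let μ, μ_n be Borel probability measures on X. If μ_n converges weakly to μ and S_n converges to S in the weak Hausdorff sense, then μ(S) ≥ limsup_{n→∞} μ_n(S_n). -/
open MeasureTheory Metric Filter Set TopologicalSpace
open scoped ENNReal Topology

noncomputable section

/-- if `μₙ → μ` weakly and `Sₙ → S` weakly Hausdorff (all sets closed),
then `μ(S) ≥ limsup μₙ(Sₙ)`. -/
theorem stmt_18 {X : Type*} [MetricSpace X] [CompleteSpace X] [SeparableSpace X]
    [MeasurableSpace X] [BorelSpace X]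
    (S : Set X) (Ss : ℕ → Set X) (hS : IsClosed S) (hSs : ∀ n, IsClosed (Ss n))
    (μ : Measure X) (μs : ℕ → Measure X)
    [IsProbabilityMeasure μ] [∀ n, IsProbabilityMeasure (μs n)]
    (hweak : ∀ f : X → ℝ, Continuous f → (∃ C : ℝ, ∀ x, |f x| ≤ C) →
      Tendsto (fun n => ∫ x, f x ∂(μs n)) atTop (𝓝 (∫ x, f x ∂μ)))
    (hwh : WeakHausTendsto Ss S) :
    Filter.limsup (fun n => μs n (Ss n)) atTop ≤ μ S := by
  obtain ⟨hwh1, hwh2⟩ := hwh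
  -- package as ProbabilityMeasure convergence
  set P : ProbabilityMeasure X := ⟨μ, ‹_›⟩ with hP
  set Ps : ℕ → ProbabilityMeasure X := fun n => ⟨μs n, inferInstance⟩ with hPs
  have htend : Tendsto Ps atTop (𝓝 P) := by
    rw [ProbabilityMeasure.tendsto_iff_forall_integral_tendsto]
    intro f
    exact hweak f f.continuous ⟨‖f‖, fun x => by
      simpa [Real.norm_eq_abs] using f.norm_coe_le_norm x⟩
  have port : ∀ F : Set X, IsClosed F →
      Filter.limsup (fun n => μs n F) atTop ≤ μ F := by
    intro F hF
    exact ProbabilityMeasure.limsup_measure_closed_le_of_tendsto htend hF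
  -- the exhausting closed sets
  set D : ℕ → Set X := fun k =>
    {x | ∀ n ≥ k, ENNReal.ofReal (((k : ℝ) + 1)⁻¹) ≤ EMetric.infEdist x (Ss n)} with hD
  have hDclosed : ∀ k, IsClosed (D k) := by
    intro k
    have : D k = ⋂ n ∈ Ici k, {x | ENNReal.ofReal (((k : ℝ) + 1)⁻¹) ≤ EMetric.infEdist x (Ss n)} := by
      ext x; simp [hD, mem_iInter]
    rw [this]
    exact isClosed_biInter fun n _ =>
      isClosed_le continuous_const (EMetric.continuous_infEdist)
  have hDmono : Monotone D := by
    intro k l hkl x hx n hn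
    refine le_trans ?_ (hx n (le_trans hkl hn))
    apply ENNReal.ofReal_le_ofReal
    apply inv_anti₀ (by positivity)
    have : (k:ℝ) ≤ l := by exact_mod_cast hkl
    linarith
  have hDsub : ∀ k, D k ⊆ Sᶜ := by
    intro k x hx hxS
    have h0 := hwh1 x hxS
    have hlt : ∀ᶠ n in atTop, EMetric.infEdist x (Ss n) < ENNReal.ofReal (((k : ℝ) + 1)⁻¹) := by
      refine h0.eventually_lt_const ?_
      simp [ENNReal.ofReal_pos]; positivity
    rcases (hlt.and (eventually_ge_atTop k)).exists with ⟨n, hn1, hn2⟩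
    exact absurd (hx n hn2) (not_le.mpr hn1)
  have hDsup : Sᶜ ⊆ ⋃ k, D k := by
    intro x hx
    have h0 := hwh2 x hx
    obtain ⟨a, ha0, halt⟩ : ∃ a : ℝ≥0∞, 0 < a ∧ a < liminf (fun n => EMetric.infEdist x (Ss n)) atTop := by
      rcases exists_between h0 with ⟨a, h1, h2⟩
      exact ⟨a, h1, h2⟩
    have hev : ∀ᶠ n in atTop, a < EMetric.infEdist x (Ss n) :=
      eventually_lt_of_lt_liminf halt
    rcases eventually_atTop.mp hev with ⟨N, hN⟩
    obtain ⟨m, hm⟩ : ∃ m : ℕ, (m : ℝ≥0∞)⁻¹ < a := ENNReal.exists_inv_nat_lt ha0.ne'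
    refine mem_iUnion.mpr ⟨max N m, fun n hn => ?_⟩
    have h1 : ENNReal.ofReal (((max N m : ℕ) : ℝ) + 1)⁻¹ ≤ (m : ℝ≥0∞)⁻¹ := by
      rw [ENNReal.ofReal_inv_of_pos (by positivity)]
      apply ENNReal.inv_le_inv.mpr
      rw [ENNReal.ofReal_add (by positivity) zero_le_one]
      simp only [ENNReal.ofReal_natCast, ENNReal.ofReal_one]
      calc (m : ℝ≥0∞) ≤ (max N m : ℕ) := by exact_mod_cast Nat.cast_le.mpr (le_max_right N m)
        _ ≤ (max N m : ℕ) + 1 := le_self_add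
    exact h1.trans (le_of_lt (lt_trans hm (hN n (le_trans (le_max_left N m) hn))))
  -- now the main estimate
  refine ENNReal.le_of_forall_pos_le_add fun ε hε _ => ?_
  set L : ℝ≥0∞ := ⨆ k, μ (D k) with hL
  have hone : 1 ≤ μ S + L := by
    have h1 : μ S + μ Sᶜ = 1 := by
      rw [measure_add_measure_compl hS.measurableSet, measure_univ]
    have h2 : μ Sᶜ ≤ L := by
      calc μ Sᶜ ≤ μ (⋃ k, D k) := measure_mono hDsup
        _ = L := hDmono.directed_le.measure_iUnion
    calc (1:ℝ≥0∞) = μ S + μ Sᶜ := h1.symm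
      _ ≤ μ S + L := add_le_add_right h2 _
  have hk : ∃ k, L ≤ μ (D k) + ε := by
    by_cases hεL : L ≤ (ε : ℝ≥0∞)
    · exact ⟨0, hεL.trans le_add_self⟩
    · push_neg at hεL
      have hLne : L ≠ ∞ := by
        refine ne_top_of_le_ne_top (by simp : (1:ℝ≥0∞) ≠ ∞) ?_
        exact iSup_le fun k => prob_le_one
      have hsub : L - ε < L :=
        ENNReal.sub_lt_self hLne (zero_le.trans_lt hεL).ne' (by exact_mod_cast hε.ne')
      obtain ⟨k, hk⟩ := lt_iSup_iff.mp (hL ▸ hsub)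
      exact ⟨k, le_of_lt ((ENNReal.sub_lt_iff_lt_right ENNReal.coe_ne_top hεL.le).mp hk)⟩
  obtain ⟨k, hk⟩ := hk
  set r : ℝ := ((k:ℝ) + 1)⁻¹ with hr
  have hrpos : 0 < r := by positivity
  have key : ∀ n ≥ k, Ss n ⊆ (thickening r (D k))ᶜ := by
    intro n hn y hy hy2
    obtain ⟨z, hz, hdz⟩ := Metric.mem_thickening_iff.mp hy2
    have h1 : ENNReal.ofReal r ≤ EMetric.infEdist z (Ss n) := hz n hn
    have h2 : EMetric.infEdist z (Ss n) ≤ edist z y := EMetric.infEdist_le_edist_of_mem hy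
    have h3 : edist z y < ENNReal.ofReal r := by
      rw [edist_dist]
      exact ENNReal.ofReal_lt_ofReal_iff hrpos |>.mpr (by rwa [dist_comm] at hdz)
    exact absurd (h1.trans h2) (not_le.mpr h3)
  have hEclosed : IsClosed (thickening r (D k))ᶜ := isOpen_thickening.isClosed_compl
  calc limsup (fun n => μs n (Ss n)) atTop
      ≤ limsup (fun n => μs n (thickening r (D k))ᶜ) atTop := by
        refine Filter.limsup_le_limsup ?_ isCobounded_le_of_bot isBounded_le_of_top
        filter_upwards [eventually_ge_atTop k] with n hn
        exact measure_mono (key n hn)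
    _ ≤ μ (thickening r (D k))ᶜ := port _ hEclosed
    _ ≤ μ (D k)ᶜ := measure_mono (compl_subset_compl.mpr (self_subset_thickening hrpos _))
    _ = 1 - μ (D k) := by
        rw [measure_compl (hDclosed k).measurableSet (measure_ne_top μ _), measure_univ]
    _ ≤ μ S + ε := by
        rw [tsub_le_iff_right]
        calc (1:ℝ≥0∞) ≤ μ S + L := hone
          _ ≤ μ S + (μ (D k) + ε) := add_le_add_right hk _
          _ = μ S + ↑ε + μ (D k) := by ring

end
end
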